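/- A functor G : B ⥤ A is an equivalence of categories if and only if G is both codense and monadic, where G is codense means that the identity functor 𝟭_A together with the identity natural transformation G ⋙ 𝟭_A ⟶ G is a right Kan extension of G along G, and monadic means that G is a monadic right adjoint. -/

import Mathlib

open CategoryTheory CategoryTheory.Limits

universe u₁ u₂ v₁ v₂

namespace Stmt15Aux

variable {B : Type u₁} {A : Type u₂} [Category.{v₁} B] [Category.{v₂} A]
  {F : A ⥤ B} {G : B ⥤ A} (adj : F ⊣ G)

/-- The canonical natural transformation `G ⋙ (F ⋙ G) ⟶ G` induced by the counit. -/
def beta : G ⋙ F ⋙ G ⟶ G where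
  app b := G.map (adj.counit.app b)
  naturality b b' f := by
    dsimp
    rw [← G.map_comp, ← G.map_comp, adj.counit_naturality]

/-- When `G` has a left adjoint `F`, the functor `F ⋙ G` with `beta adj` is a right Kan
extension of `G` along `G`. -/
noncomputable def isUniversal :
    (Functor.RightExtension.mk (F ⋙ G) (beta adj)).IsUniversal :=
  IsTerminal.ofUniqueHom
    (fun E => CostructuredArrow.homMk
      { app := fun X => E.left.map (adj.unit.app X) ≫ E.hom.app (F.obj X)
        naturality := fun X Y f => by
          have h1 := adj.unit.naturality f
          have h2 := E.hom.naturality (F.map f)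
          dsimp at h1 h2 ⊢
          change E.left.map f ≫ E.left.map (adj.unit.app Y) ≫ E.hom.app (F.obj Y) =
            (E.left.map (adj.unit.app X) ≫ E.hom.app (F.obj X)) ≫ G.map (F.map f)
          rw [← Category.assoc, ← E.left.map_comp, h1, E.left.map_comp,
            Category.assoc, h2, Category.assoc] }
      (by
        ext b
        dsimp [beta]
        erw [Category.assoc, ← E.hom.naturality (adj.counit.app b)]
        dsimp
        rw [← Category.assoc, ← E.left.map_comp, adj.right_triangle_components,
          E.left.map_id, Category.id_comp]))
    (fun E m => by
      ext X
      have hw := congrArg (fun (t : G ⋙ E.left ⟶ G) => t.app (F.obj X)) m.w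
      dsimp [beta] at hw ⊢
      rw [Category.comp_id] at hw
      have hnat := m.left.naturality (adj.unit.app X)
      dsimp at hnat
      dsimp [Functor.RightExtension.mk] at hw hnat ⊢
      calc _
          = m.left.app X ≫ G.map (F.map (adj.unit.app X)) ≫ G.map (adj.counit.app (F.obj X)) := by
            erw [← G.map_comp, adj.left_triangle_components, G.map_id]
            exact (Category.comp_id _).symm
        _ = E.left.map (adj.unit.app X) ≫ m.left.app (G.obj (F.obj X)) ≫
              G.map (adj.counit.app (F.obj X)) := by
            erw [← Category.assoc, ← hnat, Category.assoc]
            rfl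
        _ = E.left.map (adj.unit.app X) ≫ E.hom.app (F.obj X) := by
            erw [hw])

lemma isRKE : (F ⋙ G).IsRightKanExtension (beta adj) :=
  ⟨⟨isUniversal adj⟩⟩

lemma codense_iff_isIso_unit :
    (𝟭 A).IsRightKanExtension (G.rightUnitor.hom : G ⋙ 𝟭 A ⟶ G) ↔ IsIso adj.unit := by
  haveI := isRKE adj
  exact Functor.isRightKanExtension_iff_isIso adj.unit (beta adj) G.rightUnitor.hom
    (by ext b; simp [beta])

end Stmt15Aux

/-- A functor `G : B ⥤ A` is an equivalence of categories if and only if it is both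
codense (the identity functor `𝟭 A`, with the identity natural transformation
`G ⋙ 𝟭 A ⟶ G`, is a right Kan extension of `G` along `G`) and monadic (a monadic right
adjoint). -/
theorem stmt15 {B : Type u₁} {A : Type u₂} [Category.{v₁} B] [Category.{v₂} A]
    (G : B ⥤ A) :
    G.IsEquivalence ↔
      ((𝟭 A).IsRightKanExtension (G.rightUnitor.hom : G ⋙ 𝟭 A ⟶ G) ∧
        Nonempty (MonadicRightAdjoint G)) := by
  constructor
  · intro h
    haveI : G.IsEquivalence := h
    haveI : Reflective G := { L := G.asEquivalence.symm.functor
                              adj := G.asEquivalence.symm.toAdjunction }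
    refine ⟨(Stmt15Aux.codense_iff_isIso_unit (G := G)
      G.asEquivalence.symm.toAdjunction).2 ?_, ⟨inferInstance⟩⟩
    simp only [Equivalence.toAdjunction_unit]
    exact Iso.isIso_hom _
  · rintro ⟨hc, ⟨hm⟩⟩
    haveI := hm
    set adj := monadicAdjunction G with hadj
    haveI hu : IsIso adj.unit := (Stmt15Aux.codense_iff_isIso_unit adj).1 hc
    haveI : ∀ X, IsIso (adj.unit.app X) := fun X => inferInstance
    haveI : G.ReflectsIsomorphisms := ⟨fun f hf => by
      haveI : IsIso ((Monad.comparison adj ⋙ adj.toMonad.forget).map f) :=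
        (NatIso.isIso_map_iff (Monad.comparisonForget adj) f).mpr hf
      exact isIso_of_reflects_iso f (Monad.comparison adj ⋙ adj.toMonad.forget)⟩
    haveI : ∀ Y, IsIso (adj.counit.app Y) := fun Y => by
      haveI : IsIso (G.map (adj.counit.app Y)) := by
        rw [← IsIso.inv_eq_of_hom_inv_id (adj.right_triangle_components Y)]
        infer_instance
      exact isIso_of_reflects_iso _ G
    exact adj.toEquivalence.isEquivalence_inverse
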